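/- If (E₀, E₁) is an exceptional pair in a k-linear triangulated category, then the right mutation followed by the left mutation recovers the original object: L_{E₁}(R_{E₁}E₀) ≅ E₀. -/

import Mathlib

/-!
Let `P` be the graded right orthogonal `E₁^⊥ = {X | Hom(E₁, X⟦n⟧) = 0 for all n}` and call a
morphism a `P`-equivalence when its cone lies in `P`, i.e. when it induces isomorphisms on all
`Hom(E₁, -⟦n⟧)`. Both `ev' : T' ⟶ R` and the map `W⟦-1⟧ ⟶ R` of the rotated right mutation
triangle are `P`-equivalences (the latter because its cone `E₀` lies in `P`), and both sources
lie in the left orthogonal of `P`, whose objects are exactly the `P`-colocal ones. Two colocal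
objects over `R` via `P`-equivalences are isomorphic over `R`, so `T' ≅ W⟦-1⟧` compatibly with
the maps to `R`, and the cones `L` and `E₀` of these maps are isomorphic.
-/

open CategoryTheory Limits Pretriangulated

/-- An object `E` of a `k`-linear triangulated category is exceptional if
`Hom^•(E, E) = k`. -/
def IsExceptionalObj (k : Type*) [Field k] {D : Type*} [Category D] [Preadditive D]
    [HasShift D ℤ] [CategoryTheory.Linear k D] (E : D) : Prop :=
  (∀ n : ℤ, n ≠ 0 → ∀ f : E ⟶ E⟦n⟧, f = 0) ∧
    (∀ f : E ⟶ E, ∃ c : k, f = c • 𝟙 E)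

open Opposite

namespace CategoryTheory

lemma MorphismProperty.exists_iso_comp_eq_of_isColocal {C : Type*} [Category C]
    {W : MorphismProperty C} {X X' R : C} (hX : W.isColocal X) (hX' : W.isColocal X')
    {u : X ⟶ R} {u' : X' ⟶ R} (hu : W u) (hu' : W u') :
    ∃ e : X ≅ X', e.hom ≫ u' = u := by
  obtain ⟨φ, hφ⟩ := (hX u' hu').2 u
  obtain ⟨ψ, hψ⟩ := (hX' u hu).2 u'
  refine ⟨⟨φ, ψ, (hX u hu).1 ?_, (hX' u' hu').1 ?_⟩, hφ⟩
  · simp only [Category.assoc, hψ, hφ, Category.id_comp]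
  · simp only [Category.assoc, hφ, hψ, Category.id_comp]

lemma eq_zero_of_forall_shift_eq_zero {C : Type*} [Category C] [HasZeroMorphisms C]
    [HasShift C ℤ] {X Y : C} (h : ∀ n : ℤ, ∀ f : X ⟶ Y⟦n⟧, f = 0) (f : X ⟶ Y) : f = 0 := by
  rw [← cancel_mono ((shiftFunctorZero C ℤ).inv.app Y), zero_comp]
  exact h 0 _

namespace Pretriangulated

variable {D : Type*} [Category D] [Preadditive D] [HasShift D ℤ]

lemma mem_homologicalKernel_preadditiveCoyoneda_iff {E X : D} :
    (preadditiveCoyoneda.obj (op E)).homologicalKernel X ↔ ∀ n : ℤ, ∀ f : E ⟶ X⟦n⟧, f = 0 :=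
  forall_congr' fun _ => AddCommGrpCat.isZero_iff_subsingleton.trans (subsingleton_iff_forall_eq 0)

lemma leftOrthogonal_homologicalKernel_preadditiveCoyoneda {E X : D}
    (h : ∀ Y : D, (∀ n : ℤ, ∀ f : E ⟶ Y⟦n⟧, f = 0) → ∀ n : ℤ, ∀ f : X ⟶ Y⟦n⟧, f = 0) :
    (preadditiveCoyoneda.obj (op E)).homologicalKernel.leftOrthogonal X := fun Y f hY =>
  eq_zero_of_forall_shift_eq_zero (h Y (mem_homologicalKernel_preadditiveCoyoneda_iff.1 hY)) f

variable [HasZeroObject D] [∀ n : ℤ, (shiftFunctor D n).Additive] [Pretriangulated D]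

lemma homologicalKernel_preadditiveCoyoneda_trW_iff {E X Y : D} (f : X ⟶ Y) :
    (preadditiveCoyoneda.obj (op E)).homologicalKernel.trW f ↔
      ∀ n : ℤ, Function.Bijective (fun g : E ⟶ X⟦n⟧ => g ≫ f⟦n⟧') := by
  rw [Functor.mem_homologicalKernel_trW_iff]
  simp only [ConcreteCategory.isIso_iff_bijective]
  rfl

end Pretriangulated

end CategoryTheory

/-- `W` models `Hom^•(E₀, E₁)^* ⊗ E₁` and `T'` models `Hom^•(E₁, R) ⊗ E₁`. -/
theorem left_mutation_right_mutation_iso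
    (k : Type*) [Field k] (D : Type*) [Category D] [Preadditive D] [HasZeroObject D]
    [HasShift D ℤ] [∀ n : ℤ, (shiftFunctor D n).Additive] [Pretriangulated D]
    [CategoryTheory.Linear k D]
    (E₀ E₁ : D)
    (hE₀ : IsExceptionalObj k E₀) (hE₁ : IsExceptionalObj k E₁)
    (hpair : ∀ n : ℤ, ∀ f : E₁ ⟶ E₀⟦n⟧, f = 0)
    -- the right mutation triangle `R → E₀ → W → R⟦1⟧`
    (R W : D) (ρ : R ⟶ E₀) (coev : E₀ ⟶ W) (δ : W ⟶ R⟦(1 : ℤ)⟧)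
    (htriR : Triangle.mk ρ coev δ ∈ distTriang D)
    (hWgen : ∀ X : D, (∀ n : ℤ, ∀ f : E₁ ⟶ X⟦n⟧, f = 0) →
      ∀ n : ℤ, ∀ f : W ⟶ X⟦n⟧, f = 0)
    (hWgen' : ∀ X : D, (∀ n : ℤ, ∀ f : X ⟶ E₁⟦n⟧, f = 0) →
      ∀ n : ℤ, ∀ f : X ⟶ W⟦n⟧, f = 0)
    (hWuniv : ∀ (n : ℤ) (g : E₀ ⟶ E₁⟦n⟧), ∃! f : W ⟶ E₁⟦n⟧, coev ≫ f = g)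
    (hRorth : ∀ n : ℤ, ∀ f : R ⟶ E₁⟦n⟧, f = 0)
    -- the left mutation triangle `T' → R → L → T'⟦1⟧`
    (T' L : D) (ev' : T' ⟶ R) (ι' : R ⟶ L) (δ' : L ⟶ T'⟦(1 : ℤ)⟧)
    (htriL : Triangle.mk ev' ι' δ' ∈ distTriang D)
    (hTgen : ∀ X : D, (∀ n : ℤ, ∀ f : E₁ ⟶ X⟦n⟧, f = 0) →
      ∀ n : ℤ, ∀ f : T' ⟶ X⟦n⟧, f = 0)
    (hTgen' : ∀ X : D, (∀ n : ℤ, ∀ f : X ⟶ E₁⟦n⟧, f = 0) →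
      ∀ n : ℤ, ∀ f : X ⟶ T'⟦n⟧, f = 0)
    (hTuniv : ∀ (n : ℤ) (g : E₁ ⟶ R⟦n⟧),
      ∃! f : E₁ ⟶ T'⟦n⟧, f ≫ (shiftFunctor D n).map ev' = g) :
    Nonempty (L ≅ E₀) := by
  set P := (preadditiveCoyoneda.obj (op E₁)).homologicalKernel
  have htri₀ := inv_rot_of_distTriang _ htriR
  have hev' : P.trW ev' := (homologicalKernel_preadditiveCoyoneda_trW_iff ev').2 fun n =>
    (Function.bijective_iff_existsUnique _).2 (hTuniv n)
  have hu : P.trW (Triangle.mk ρ coev δ).invRotate.mor₁ :=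
    ObjectProperty.trW.mk P htri₀ (mem_homologicalKernel_preadditiveCoyoneda_iff.2 hpair)
  have hT' : P.trW.isColocal T' := by
    rw [ObjectProperty.isColocal_trW]
    exact leftOrthogonal_homologicalKernel_preadditiveCoyoneda hTgen
  have hW : P.trW.isColocal (W⟦(-1 : ℤ)⟧) := by
    rw [ObjectProperty.isColocal_trW]
    exact P.leftOrthogonal.le_shift (-1) W
      (leftOrthogonal_homologicalKernel_preadditiveCoyoneda hWgen)
  obtain ⟨e, he⟩ := MorphismProperty.exists_iso_comp_eq_of_isColocal hT' hW hev' hu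
  exact ⟨Triangle.π₃.mapIso
    (isoTriangleOfIso₁₂ _ _ htriL htri₀ e (Iso.refl R) ((Category.comp_id _).trans he.symm))⟩
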